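/- arXiv:2312.09497 — 3 statements merged into one kernel-verified Lean document; each statement's English description precedes it below -/
import Mathlib

section
/- Let α ∈ (0,1) and let ψ : ℝ → ℝ be given by ψ(x₁) = dist(x₁, C)^α for x₁ ∈ (0,1) and ψ(x₁) = 0 otherwise. Then for every x₁ ∈ C \ {0,1} one has limsup_{t→0⁺} ψ(x₁ + t)/t^α > 0 and limsup_{t→0⁺} ψ(x₁ − t)/t^α > 0. -/
open MeasureTheory Set Metric Filter Topology
open scoped ENNReal NNReal

noncomputable section

/-- The cusp function `ψ(x) = dist(x, C)^α` on `(0,1)`, zero elsewhere; here `C = cantorSet`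
is Mathlib's classical ternary Cantor set. -/
def psiC (α : ℝ) (x : ℝ) : ℝ :=
  if x ∈ Ioo (0 : ℝ) 1 then infDist x cantorSet ^ α else 0

/-- The domain above the Cantor-cuspidal graph. -/
def OmegaPlus (α : ℝ) : Set (ℝ × ℝ) := {x | psiC α x.1 < x.2}

/-- The domain below the Cantor-cuspidal graph. -/
def OmegaMinus (α : ℝ) : Set (ℝ × ℝ) := {x | x.2 < psiC α x.1}

/-- The Cantor-cuspidal graph `Γ`. -/
def graphC (α : ℝ) : Set (ℝ × ℝ) := {x | x.2 = psiC α x.1}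

/-! If `x ∈ C` and `x ≤ 1 - 3⁻ⁿ`, some `0 < t ≤ (3/2)·3⁻ⁿ` has `dist(x + t, C) ≥ t / 3`. By the
self-similarity `C = C / 3 ∪ (2 + C) / 3` this reduces to the same claim for `3x` or `3x - 2` at
scale `3⁻ⁿ⁺¹`, except when `x` lies within `3⁻ⁿ` below `1 / 3`; then `x + t` can be taken in the
middle gap `(1 / 3, 2 / 3)`. Hence `ψ(x + t) / t^α ≥ 3^(-α)` for arbitrarily small `t > 0`, while
`ψ(x + t) ≤ t^α` bounds the quotient. The left-hand limsup follows from the symmetry `x ↦ 1 - x`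
of `C` and of `ψ`. -/

lemma one_mem_cantorSet : (1 : ℝ) ∈ cantorSet :=
  mem_iInter.2 fun n => by
    induction n with
    | zero => simp
    | succ n ih => exact Or.inr ⟨1, ih, by norm_num⟩

lemma one_sub_mem_preCantorSet {x : ℝ} {n : ℕ} (hx : x ∈ preCantorSet n) :
    1 - x ∈ preCantorSet n := by
  induction n generalizing x with
  | zero => exact ⟨by linarith [hx.2], by linarith [hx.1]⟩
  | succ n ih =>
    rcases hx with ⟨y, hy, rfl⟩ | ⟨y, hy, rfl⟩
    · exact Or.inr ⟨1 - y, ih hy, by ring⟩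
    · exact Or.inl ⟨1 - y, ih hy, by ring⟩

lemma one_sub_mem_cantorSet {x : ℝ} (hx : x ∈ cantorSet) : 1 - x ∈ cantorSet :=
  mem_iInter.2 fun n => one_sub_mem_preCantorSet (mem_iInter.1 hx n)

lemma image_one_sub_cantorSet : (fun x : ℝ => 1 - x) '' cantorSet = cantorSet :=
  Subset.antisymm (image_subset_iff.2 fun _ => one_sub_mem_cantorSet)
    fun x hx => ⟨1 - x, one_sub_mem_cantorSet hx, sub_sub_cancel 1 x⟩

lemma infDist_one_sub_cantorSet (x : ℝ) :
    infDist (1 - x) cantorSet = infDist x cantorSet := by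
  conv_lhs => rw [← image_one_sub_cantorSet]
  exact infDist_image (IsometryEquiv.subLeft (1 : ℝ)).isometry

lemma cantorSet_nonempty : cantorSet.Nonempty := ⟨0, zero_mem_cantorSet⟩

lemma le_one_third_or_two_thirds_le_of_mem_cantorSet {x : ℝ} (hx : x ∈ cantorSet) :
    x ≤ 1 / 3 ∨ 2 / 3 ≤ x := by
  rw [cantorSet_eq_union_halves] at hx
  rcases hx with ⟨y, hy, rfl⟩ | ⟨y, hy, rfl⟩
  · exact Or.inl (by linarith [(cantorSet_subset_unitInterval hy).2])
  · exact Or.inr (by linarith [(cantorSet_subset_unitInterval hy).1])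

lemma min_le_infDist_cantorSet (x : ℝ) :
    min (x - 1 / 3) (2 / 3 - x) ≤ infDist x cantorSet := by
  refine (le_infDist cantorSet_nonempty).2 fun p hp => ?_
  rw [Real.dist_eq]
  rcases le_one_third_or_two_thirds_le_of_mem_cantorSet hp with hp | hp
  · linarith [min_le_left (x - 1 / 3) (2 / 3 - x), le_abs_self (x - p)]
  · linarith [min_le_right (x - 1 / 3) (2 / 3 - x), neg_abs_le (x - p)]

lemma dist_div_three (x y : ℝ) : dist (x / 3) (y / 3) = dist x y / 3 := by
  rw [Real.dist_eq, Real.dist_eq, ← sub_div, abs_div, abs_of_pos (three_pos : (0 : ℝ) < 3)]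

lemma infDist_cantorSet_div_three_le {z : ℝ} (hz : z ≤ 3 / 2) :
    infDist z cantorSet / 3 ≤ infDist (z / 3) cantorSet := by
  refine (le_infDist cantorSet_nonempty).2 fun p hp => ?_
  rw [cantorSet_eq_union_halves] at hp
  rcases hp with ⟨y, hy, rfl⟩ | ⟨y, hy, rfl⟩
  · rw [dist_div_three]
    gcongr
    exact infDist_le_dist_of_mem hy
  · -- the right copy lies beyond `2 / 3`, further from `z / 3` than `1 ∈ C` is from `z`
    have h₁ : infDist z cantorSet ≤ |z - 1| :=
      Real.dist_eq z 1 ▸ infDist_le_dist_of_mem one_mem_cantorSet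
    have h₂ := neg_abs_le (z / 3 - (2 + y) / 3)
    rw [Real.dist_eq]
    cases abs_cases (z - 1) <;> linarith [(cantorSet_subset_unitInterval hy).1]

lemma infDist_cantorSet_div_three_le_two_add {z : ℝ} (hz : 0 ≤ z) :
    infDist z cantorSet / 3 ≤ infDist ((2 + z) / 3) cantorSet := by
  refine (le_infDist cantorSet_nonempty).2 fun p hp => ?_
  rw [cantorSet_eq_union_halves] at hp
  rcases hp with ⟨y, hy, rfl⟩ | ⟨y, hy, rfl⟩
  · have h₁ : infDist z cantorSet ≤ |z - 0| :=
      Real.dist_eq z 0 ▸ infDist_le_dist_of_mem zero_mem_cantorSet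
    have h₂ := le_abs_self ((2 + z) / 3 - y / 3)
    rw [sub_zero, abs_of_nonneg hz] at h₁
    rw [Real.dist_eq]
    linarith [(cantorSet_subset_unitInterval hy).2]
  · dsimp only
    rw [dist_div_three, dist_add_left]
    gcongr
    exact infDist_le_dist_of_mem hy

lemma exists_shift_near_one_third_far_from_cantorSet {x s : ℝ} (hs₀ : 0 < s) (hs : s ≤ 1 / 3)
    (hx₁ : 1 / 3 - s ≤ x) (hx₂ : x ≤ 1 / 3) :
    ∃ t, 0 < t ∧ t ≤ 3 / 2 * s ∧ x + t < 1 ∧ t ≤ 3 * infDist (x + t) cantorSet := by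
  refine ⟨1 / 3 + s / 2 - x, by linarith, by linarith, by linarith, ?_⟩
  have hgap := min_le_infDist_cantorSet (1 / 3 + s / 2)
  rw [min_eq_left (by linarith)] at hgap
  rw [add_sub_cancel]
  linarith

lemma exists_small_shift_far_from_cantorSet (n : ℕ) {x : ℝ} (hx : x ∈ cantorSet)
    (hxn : x ≤ 1 - (1 / 3 : ℝ) ^ n) :
    ∃ t, 0 < t ∧ t ≤ 3 / 2 * (1 / 3 : ℝ) ^ n ∧ x + t < 1 ∧
      t ≤ 3 * infDist (x + t) cantorSet := by
  induction n generalizing x with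
  | zero =>
    have hx₀ : x = 0 := le_antisymm (by simpa using hxn) (cantorSet_subset_unitInterval hx).1
    subst hx₀
    obtain ⟨t, ht₀, ht, hxt, hdist⟩ := exists_shift_near_one_third_far_from_cantorSet (x := 0)
      (s := 1 / 3) (by norm_num) le_rfl (by norm_num) (by norm_num)
    exact ⟨t, ht₀, by linarith, hxt, hdist⟩
  | succ n ih =>
    have hpow : (0 : ℝ) < (1 / 3) ^ n := by positivity
    rw [pow_succ] at hxn ⊢
    rw [cantorSet_eq_union_halves] at hx
    rcases hx with ⟨y, hy, rfl⟩ | ⟨y, hy, rfl⟩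
    · by_cases hyn : y ≤ 1 - (1 / 3 : ℝ) ^ n
      · obtain ⟨t, ht₀, ht, hyt, hdist⟩ := ih hy hyn
        have hscale := infDist_cantorSet_div_three_le (z := y + t) (by linarith)
        rw [add_div] at hscale
        exact ⟨t / 3, by positivity, by linarith, by linarith, by linarith⟩
      · have hpow₁ : (1 / 3 : ℝ) ^ n ≤ 1 := pow_le_one₀ (by norm_num) (by norm_num)
        exact exists_shift_near_one_third_far_from_cantorSet (by positivity) (by linarith)
          (by linarith) (by linarith [(cantorSet_subset_unitInterval hy).2])
    · obtain ⟨t, ht₀, ht, hyt, hdist⟩ := ih hy (by linarith)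
      have hscale := infDist_cantorSet_div_three_le_two_add (z := y + t)
        (by linarith [(cantorSet_subset_unitInterval hy).1])
      rw [← add_assoc, add_div] at hscale
      exact ⟨t / 3, by positivity, by linarith, by linarith, by linarith⟩

lemma frequently_far_from_cantorSet {x : ℝ} (hx : x ∈ cantorSet) (hx₁ : x < 1) :
    ∃ᶠ t in 𝓝[>] (0 : ℝ), x + t < 1 ∧ t ≤ 3 * infDist (x + t) cantorSet := by
  rw [(nhdsGT_basis (0 : ℝ)).frequently_iff]
  intro ε hε
  obtain ⟨n, hn⟩ := exists_pow_lt_of_lt_one (lt_min (sub_pos.2 hx₁) (half_pos hε))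
    (by norm_num : (1 / 3 : ℝ) < 1)
  obtain ⟨t, ht₀, ht, hxt, hdist⟩ :=
    exists_small_shift_far_from_cantorSet n hx (by linarith [min_le_left (1 - x) (ε / 2)])
  refine ⟨t, ⟨ht₀, ?_⟩, hxt, hdist⟩
  linarith [min_le_right (1 - x) (ε / 2)]

lemma psiC_one_sub (α x : ℝ) : psiC α (1 - x) = psiC α x := by
  have hmem : 1 - x ∈ Ioo (0 : ℝ) 1 ↔ x ∈ Ioo (0 : ℝ) 1 := by
    simp only [mem_Ioo, sub_pos, sub_lt_self_iff, and_comm]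
  simp only [psiC, hmem, infDist_one_sub_cantorSet]

lemma psiC_add_div_rpow_le_one {α x t : ℝ} (hα : 0 ≤ α) (hx : x ∈ cantorSet) (ht : 0 < t) :
    psiC α (x + t) / t ^ α ≤ 1 := by
  rw [div_le_one (Real.rpow_pos_of_pos ht α), psiC]
  split_ifs
  · have hdist : infDist (x + t) cantorSet ≤ t := by
      simpa [Real.dist_eq, abs_of_pos ht] using infDist_le_dist_of_mem (x := x + t) hx
    exact Real.rpow_le_rpow infDist_nonneg hdist hα
  · exact (Real.rpow_pos_of_pos ht α).le

lemma rpow_le_psiC_div_rpow {α w t : ℝ} (hα : 0 ≤ α) (hw : w ∈ Ioo (0 : ℝ) 1) (ht : 0 < t)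
    (hdist : t ≤ 3 * infDist w cantorSet) :
    (1 / 3 : ℝ) ^ α ≤ psiC α w / t ^ α := by
  rw [psiC, if_pos hw, ← Real.div_rpow infDist_nonneg ht.le]
  refine Real.rpow_le_rpow (by norm_num) ?_ hα
  rw [le_div_iff₀ ht]
  linarith

lemma limsup_psiC_add_div_rpow_pos {α x : ℝ} (hα : 0 ≤ α) (hx : x ∈ cantorSet)
    (hx₁ : x < 1) :
    0 < limsup (fun t : ℝ => psiC α (x + t) / t ^ α) (𝓝[>] (0 : ℝ)) := by
  have hbdd : IsBoundedUnder (· ≤ ·) (𝓝[>] (0 : ℝ)) fun t => psiC α (x + t) / t ^ α :=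
    isBoundedUnder_of_eventually_le <| eventually_nhdsWithin_of_forall fun t ht =>
      psiC_add_div_rpow_le_one hα hx ht
  have hfreq : ∃ᶠ t in 𝓝[>] (0 : ℝ), (1 / 3 : ℝ) ^ α ≤ psiC α (x + t) / t ^ α := by
    refine ((frequently_far_from_cantorSet hx hx₁).and_eventually self_mem_nhdsWithin).mono ?_
    rintro t ⟨⟨hxt, hdist⟩, ht⟩
    have hx₀ := (cantorSet_subset_unitInterval hx).1
    exact rpow_le_psiC_div_rpow hα ⟨by linarith, hxt⟩ ht hdist
  exact (Real.rpow_pos_of_pos (by norm_num) α).trans_le (le_limsup_of_frequently_le hfreq hbdd)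

theorem psiC_cusp_limsup_pos_general (α : ℝ) (hα₀ : 0 < α) (x : ℝ)
    (hx : x ∈ cantorSet) (hx₀ : x ≠ 0) (hx₁ : x ≠ 1) :
    0 < Filter.limsup (fun t : ℝ => psiC α (x + t) / t ^ α) (𝓝[>] (0 : ℝ)) ∧
    0 < Filter.limsup (fun t : ℝ => psiC α (x - t) / t ^ α) (𝓝[>] (0 : ℝ)) := by
  obtain ⟨hx₀', hx₁'⟩ := cantorSet_subset_unitInterval hx
  refine ⟨limsup_psiC_add_div_rpow_pos hα₀.le hx (hx₁'.lt_of_ne hx₁), ?_⟩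
  have hreflect : (fun t : ℝ => psiC α (x - t) / t ^ α) =
      fun t => psiC α ((1 - x) + t) / t ^ α := by
    funext t
    rw [show 1 - x + t = 1 - (x - t) by ring, psiC_one_sub]
  rw [hreflect]
  exact limsup_psiC_add_div_rpow_pos hα₀.le (one_sub_mem_cantorSet hx)
    (by linarith [hx₀'.lt_of_ne' hx₀])

/-- At every point of the Cantor set other than `0` and `1`, the graph of `ψ` is cusp-like
from both sides: `limsup_{t→0⁺} ψ(x+t)/t^α > 0` and `limsup_{t→0⁺} ψ(x−t)/t^α > 0`. -/
theorem psiC_cusp_limsup_pos (α : ℝ) (hα₀ : 0 < α) (hα₁ : α < 1) (x : ℝ)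
    (hx : x ∈ cantorSet) (hx₀ : x ≠ 0) (hx₁ : x ≠ 1) :
    0 < Filter.limsup (fun t : ℝ => psiC α (x + t) / t ^ α) (𝓝[>] (0 : ℝ)) ∧
    0 < Filter.limsup (fun t : ℝ => psiC α (x - t) / t ^ α) (𝓝[>] (0 : ℝ)) :=
  psiC_cusp_limsup_pos_general α hα₀ x hx hx₀ hx₁
end
end

section
/- For every α ∈ (0,1), both domains Ω⁺ and Ω⁻ over the Cantor-cuspidal graph satisfy the segment condition: for every boundary point x ∈ ∂Ω there exist a neighborhood U_x of x and a nonzero vector y_x ∈ ℝ² such that for every z ∈ closure(Ω) ∩ U_x and every t ∈ (0,1), the point z + t·y_x belongs to Ω. -/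
/-!
Since the endpoints `0` and `1` lie in the Cantor set, `ψ` vanishes on the frontier of `(0,1)`
and is therefore continuous for `α > 0`. Thus `Ω⁺` (resp. `Ω⁻`) is the strict epigraph
(resp. hypograph) of a continuous function, whose closure lies in the non-strict one, and the
single vertical direction `(0, 1)` (resp. `(0, -1)`) works at every boundary point with `U = ℝ²`.
-/

open MeasureTheory Set Metric Filter Topology
open scoped ENNReal NNReal

noncomputable section

/-- A domain `Ω ⊂ ℝ²` satisfies the segment condition if every boundary point has a
neighborhood `U` and a nonzero vector `y` such that `z + t • y ∈ Ω` for every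
`z ∈ closure Ω ∩ U` and every `0 < t < 1`. -/
def SegmentCond (Ω : Set (ℝ × ℝ)) : Prop :=
  ∀ x ∈ frontier Ω, ∃ U ∈ 𝓝 x, ∃ y : ℝ × ℝ, y ≠ 0 ∧
    ∀ z ∈ closure Ω ∩ U, ∀ t : ℝ, 0 < t → t < 1 → z + t • y ∈ Ω

lemma one_mem_preCantorSet (n : ℕ) : (1 : ℝ) ∈ preCantorSet n := by
  induction n with
  | zero => simp [preCantorSet]
  | succ n ih => exact Or.inr ⟨1, ih, by norm_num⟩

lemma continuous_psiC {α : ℝ} (hα : 0 < α) : Continuous (psiC α) := by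
  refine Continuous.if (fun x hx ↦ ?_)
    ((continuous_infDist_pt _).rpow_const fun _ ↦ Or.inr hα.le) continuous_const
  have hx_mem : x ∈ cantorSet := by
    rw [ofPred_mem_eq, frontier_Ioo zero_lt_one] at hx
    rcases hx with rfl | rfl
    exacts [zero_mem_cantorSet, one_mem_cantorSet]
  rw [infDist_zero_of_mem hx_mem, Real.zero_rpow hα.ne']

lemma segmentCond_of_forall_add_smul_mem {Ω : Set (ℝ × ℝ)} {y : ℝ × ℝ} (hy : y ≠ 0)
    (h : ∀ z ∈ closure Ω, ∀ t : ℝ, 0 < t → z + t • y ∈ Ω) : SegmentCond Ω :=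
  fun _ _ ↦ ⟨univ, univ_mem, y, hy, fun z hz t ht _ ↦ h z hz.1 t ht⟩

lemma segmentCond_strictEpigraph {g : ℝ → ℝ} (hg : Continuous g) :
    SegmentCond {p : ℝ × ℝ | g p.1 < p.2} := by
  refine segmentCond_of_forall_add_smul_mem (y := (0, 1)) (by simp) fun z hz t ht ↦ ?_
  have hz_le : g z.1 ≤ z.2 := closure_lt_subset_le (hg.comp continuous_fst) continuous_snd hz
  simp only [mem_ofPred_eq, Prod.fst_add, Prod.snd_add, Prod.smul_mk, smul_eq_mul, mul_zero,
    mul_one, add_zero]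
  linarith

lemma segmentCond_strictHypograph {g : ℝ → ℝ} (hg : Continuous g) :
    SegmentCond {p : ℝ × ℝ | p.2 < g p.1} := by
  refine segmentCond_of_forall_add_smul_mem (y := (0, -1)) (by simp) fun z hz t ht ↦ ?_
  have hz_le : z.2 ≤ g z.1 := closure_lt_subset_le continuous_snd (hg.comp continuous_fst) hz
  simp only [mem_ofPred_eq, Prod.fst_add, Prod.snd_add, Prod.smul_mk, smul_eq_mul, mul_zero,
    add_zero]
  linarith

theorem omega_segment_condition_general (α : ℝ) (hα₀ : 0 < α) :
    SegmentCond (OmegaPlus α) ∧ SegmentCond (OmegaMinus α) :=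
  ⟨segmentCond_strictEpigraph (continuous_psiC hα₀),
    segmentCond_strictHypograph (continuous_psiC hα₀)⟩

/-- Both `Ω⁺` and `Ω⁻` satisfy the segment condition. -/
theorem omega_segment_condition (α : ℝ) (hα₀ : 0 < α) (hα₁ : α < 1) :
    SegmentCond (OmegaPlus α) ∧ SegmentCond (OmegaMinus α) :=
  omega_segment_condition_general α hα₀
end
end

section
/- Let (log 2)/(2 log 3) < α < 1, and let p, q satisfy ((1+α) − (log 2)/(log 3))/(2α − (log 2)/(log 3)) < p < ∞ and 1 ≤ q < ((1+α) − (log 2)/(log 3))·p / ((1+α) − (log 2)/(log 3) + (1−α)p). Then the integral over ⋃_{n≥1} ⋃_{k=1}^{2^{n−1}} R⁻_{n,k} of dist(x₁, C)^{(α−1)·pq/(p−q)} dx₁ dx₂ is finite. -/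
open MeasureTheory Set Metric Filter Topology
open scoped ENNReal NNReal

noncomputable section

/-- Left endpoints of the `2^n` level-`n` closed intervals of the ternary Cantor
construction (in bit-reversed order). -/
def lep : ℕ → ℕ → ℝ
  | 0, _ => 0
  | n + 1, k => lep n (k / 2) + ((k % 2 : ℕ) : ℝ) * 2 / 3 ^ (n + 1)

/-- The removed middle-third open interval `I_{n+1}^{k+1}` (here `n ≥ 0`, `k < 2 ^ n`):
the open middle third of the level-`n` closed interval `[lep n k, lep n k + 3⁻ⁿ]`. -/
def Ink (n k : ℕ) : Set ℝ :=
  Ioo (lep n k + 1 / 3 ^ (n + 1)) (lep n k + 2 / 3 ^ (n + 1))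

/-- The set `R⁺_{n,k}` above the graph over `I_{n+1}^{k+1}`. -/
def RP (α : ℝ) (n k : ℕ) : Set (ℝ × ℝ) :=
  {x | x.1 ∈ Ink n k ∧ psiC α x.1 < x.2 ∧ x.2 < 2 * psiC α x.1}

/-- The set `R⁻_{n,k}` below the graph over `I_{n+1}^{k+1}`. -/
def RM (α : ℝ) (n k : ℕ) : Set (ℝ × ℝ) :=
  {x | x.1 ∈ Ink n k ∧ -(2 * psiC α x.1) < x.2 ∧ x.2 < psiC α x.1}

/-- The union `⋃_{n,k} R⁺_{n,k}`. -/
def RPall (α : ℝ) : Set (ℝ × ℝ) := ⋃ n, ⋃ k ∈ {k : ℕ | k < 2 ^ n}, RP α n k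

/-- The union `⋃_{n,k} R⁻_{n,k}`. -/
def RMall (α : ℝ) : Set (ℝ × ℝ) := ⋃ n, ⋃ k ∈ {k : ℕ | k < 2 ^ n}, RM α n k

open Classical in
/-- The explicit reflection over the Cantor-cuspidal graph `Γ`. -/
def reflMap (α : ℝ) (x : ℝ × ℝ) : ℝ × ℝ :=
  if x ∈ RPall α then (x.1, -3 * x.2 + 4 * psiC α x.1)
  else if x ∈ RMall α then (x.1, -x.2 / 3 + 4 / 3 * psiC α x.1)
  else (x.1, -x.2)

/-!
Write `d = dist(·, C)`, `γ = (α - 1)pq/(p - q)` and `β = γ + α`. Over a gap `I = (a, b)` of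
length `ℓ = 3^-(n+1)` the vertical section of `R⁻` has length `3ψ = 3d^α`, so the integral over
`R⁻_{n,k}` is `3 ∫_I d^β`. As `C` misses `I` and contains `0`, `min(x - a, b - x) ≤ d(x) ≤ 1`,
whence `d^β ≤ (x - a)^β + (b - x)^β + 1`, whose integral over `I` is `O(ℓ^(β+1) + ℓ)` for
`β > -1`. Summing over the `2^n` gaps of generation `n + 1` gives geometric series of ratios
`2·3^-(β+1)` and `2/3`, finite as soon as `3^(β+1) > 2`, i.e. `β + 1 > log 2 / log 3`, which is
what the constraints on `α, p, q` guarantee.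
-/

theorem lep_succ_of_lt {n k : ℕ} (hk : k < 2 ^ n) : lep (n + 1) k = lep n k / 3 := by
  induction n generalizing k with
  | zero =>
    obtain rfl : k = 0 := by simpa using hk
    simp [lep]
  | succ n ih =>
    rw [lep, ih (by omega), lep, pow_succ]
    ring

theorem lep_succ_two_pow_add {n k : ℕ} (hk : k < 2 ^ n) :
    lep (n + 1) (2 ^ n + k) = (2 + lep n k) / 3 := by
  induction n generalizing k with
  | zero =>
    obtain rfl : k = 0 := by simpa using hk
    norm_num [lep]
  | succ n ih =>
    have hdiv : (2 ^ (n + 1) + k) / 2 = 2 ^ n + k / 2 := by omega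
    have hmod : (2 ^ (n + 1) + k) % 2 = k % 2 := by omega
    rw [lep, hdiv, hmod, ih (by omega), lep, pow_succ]
    ring

theorem mem_Ink_succ_of_lt {n k : ℕ} (hk : k < 2 ^ n) {x : ℝ} :
    x ∈ Ink (n + 1) k ↔ 3 * x ∈ Ink n k := by
  simp only [Ink, mem_Ioo, lep_succ_of_lt hk, pow_succ _ (n + 1)]
  constructor <;> rintro ⟨h₁, h₂⟩ <;> constructor <;> field_simp at * <;> linarith

theorem mem_Ink_succ_two_pow_add {n k : ℕ} (hk : k < 2 ^ n) {x : ℝ} :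
    x ∈ Ink (n + 1) (2 ^ n + k) ↔ 3 * x - 2 ∈ Ink n k := by
  simp only [Ink, mem_Ioo, lep_succ_two_pow_add hk, pow_succ _ (n + 1)]
  constructor <;> rintro ⟨h₁, h₂⟩ <;> constructor <;> field_simp at * <;> linarith

theorem Ink_induction {P : ℕ → ℕ → Prop} (zero : P 0 0)
    (left : ∀ n k, k < 2 ^ n → P n k → P (n + 1) k)
    (right : ∀ n k, k < 2 ^ n → P n k → P (n + 1) (2 ^ n + k)) :
    ∀ n k, k < 2 ^ n → P n k := by
  intro n
  induction n with
  | zero =>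
    intro k hk
    obtain rfl : k = 0 := by simpa using hk
    exact zero
  | succ n ih =>
    intro k hk
    rcases lt_or_ge k (2 ^ n) with hkn | hkn
    · exact left n k hkn (ih k hkn)
    · obtain ⟨j, rfl⟩ := Nat.exists_eq_add_of_le hkn
      have hj : j < 2 ^ n := by rw [pow_succ] at hk; omega
      exact right n j hj (ih j hj)

theorem Ink_subset_Ioo {n k : ℕ} (hk : k < 2 ^ n) : Ink n k ⊆ Ioo 0 1 := by
  refine Ink_induction (P := fun n k => Ink n k ⊆ Ioo 0 1) ?_ ?_ ?_ n k hk
  · intro x hx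
    simp only [Ink, lep, mem_Ioo] at hx ⊢
    constructor <;> linarith
  · intro n k hk ih x hx
    have := ih ((mem_Ink_succ_of_lt hk).1 hx)
    constructor <;> linarith [this.1, this.2]
  · intro n k hk ih x hx
    have := ih ((mem_Ink_succ_two_pow_add hk).1 hx)
    constructor <;> linarith [this.1, this.2]

theorem disjoint_Ink_preCantorSet {n k : ℕ} (hk : k < 2 ^ n) :
    Disjoint (Ink n k) (preCantorSet (n + 1)) := by
  refine Ink_induction (P := fun n k => Disjoint (Ink n k) (preCantorSet (n + 1))) ?_ ?_ ?_ n k hk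
  · refine disjoint_left.2 fun x hx hC => ?_
    simp only [Ink, lep, mem_Ioo] at hx
    rcases hC with ⟨y, hy, rfl⟩ | ⟨y, hy, rfl⟩ <;>
      obtain ⟨hy₀, hy₁⟩ := preCantorSet_subset_unitInterval hy <;> norm_num at hx <;> linarith
  · intro n k hk ih
    refine disjoint_left.2 fun x hx hC => ?_
    have h3x := (mem_Ink_succ_of_lt hk).1 hx
    rcases hC with ⟨y, hy, rfl⟩ | ⟨y, hy, rfl⟩
    · exact disjoint_left.1 ih (by rwa [mul_div_cancel₀ _ three_ne_zero] at h3x) hy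
    · linarith [(Ink_subset_Ioo hk h3x).2, (preCantorSet_subset_unitInterval hy).1]
  · intro n k hk ih
    refine disjoint_left.2 fun x hx hC => ?_
    have h3x := (mem_Ink_succ_two_pow_add hk).1 hx
    rcases hC with ⟨y, hy, rfl⟩ | ⟨y, hy, rfl⟩
    · linarith [(Ink_subset_Ioo hk h3x).1, (preCantorSet_subset_unitInterval hy).2]
    · refine disjoint_left.1 ih ?_ hy
      rwa [mul_div_cancel₀ _ three_ne_zero, add_sub_cancel_left] at h3x

theorem disjoint_Ink_cantorSet {n k : ℕ} (hk : k < 2 ^ n) : Disjoint (Ink n k) cantorSet :=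
  (disjoint_Ink_preCantorSet hk).mono_right (iInter_subset _ _)

theorem min_sub_le_infDist {s : Set ℝ} {a b x : ℝ} (hs : s.Nonempty)
    (hd : Disjoint (Ioo a b) s) : min (x - a) (b - x) ≤ infDist x s := by
  refine (le_infDist hs).2 fun y hy => ?_
  have hy' : y ≤ a ∨ b ≤ y := by
    by_contra! h
    exact disjoint_left.1 hd ⟨h.1, h.2⟩ hy
  rw [Real.dist_eq]
  rcases hy' with hy' | hy'
  · exact (min_le_left _ _).trans ((by linarith : x - a ≤ x - y).trans (le_abs_self _))
  · exact (min_le_right _ _).trans ((by linarith : b - x ≤ -(x - y)).trans (neg_le_abs _))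

theorem infDist_cantorSet_le_one {x : ℝ} (hx : x ∈ Icc (0 : ℝ) 1) : infDist x cantorSet ≤ 1 :=
  (infDist_le_dist_of_mem zero_mem_cantorSet).trans <| by
    rw [Real.dist_eq, sub_zero, abs_of_nonneg hx.1]
    exact hx.2

theorem rpow_le_rpow_sub_add_rpow_sub_add_one {a b x d : ℝ} (β : ℝ) (hx : x ∈ Ioo a b)
    (hd : min (x - a) (b - x) ≤ d) (hd₁ : d ≤ 1) :
    d ^ β ≤ (x - a) ^ β + (b - x) ^ β + 1 := by
  have hmin : 0 < min (x - a) (b - x) := lt_min (by linarith [hx.1]) (by linarith [hx.2])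
  have hxa : 0 ≤ (x - a) ^ β := Real.rpow_nonneg (by linarith [hx.1]) β
  have hbx : 0 ≤ (b - x) ^ β := Real.rpow_nonneg (by linarith [hx.2]) β
  rcases le_or_gt 0 β with hβ | hβ
  · linarith [Real.rpow_le_one (hmin.le.trans hd) hd₁ hβ]
  · have := Real.rpow_le_rpow_of_nonpos hmin hd hβ.le
    rcases min_cases (x - a) (b - x) with ⟨h, _⟩ | ⟨h, _⟩ <;> rw [h] at this <;> linarith

theorem rpow_infDist_cantorSet_le {n k : ℕ} (hk : k < 2 ^ n) (β : ℝ) {x : ℝ} (hx : x ∈ Ink n k) :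
    infDist x cantorSet ^ β ≤
      (x - (lep n k + 1 / 3 ^ (n + 1))) ^ β + (lep n k + 2 / 3 ^ (n + 1) - x) ^ β + 1 :=
  rpow_le_rpow_sub_add_rpow_sub_add_one β hx
    (min_sub_le_infDist ⟨0, zero_mem_cantorSet⟩ (disjoint_Ink_cantorSet hk))
    (infDist_cantorSet_le_one (Ioo_subset_Icc_self (Ink_subset_Ioo hk hx)))

theorem setLIntegral_regionBetween {X : Type*} [MeasurableSpace X] {μ : Measure X}
    {f g : X → ℝ} {s : Set X} {w : X → ℝ≥0∞} (hw : Measurable w) (hf : Measurable f)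
    (hg : Measurable g) (hs : MeasurableSet s) :
    ∫⁻ z in regionBetween f g s, w z.1 ∂μ.prod volume =
      ∫⁻ x in s, w x * ENNReal.ofReal (g x - f x) ∂μ := by
  -- the weight `w ∘ Prod.fst` turns `μ.prod volume` into `(μ.withDensity w).prod volume`
  rw [← withDensity_apply _ (measurableSet_regionBetween hf hg hs), ← prod_withDensity_left hw,
    volume_regionBetween_eq_lintegral' hf hg hs,
    setLIntegral_withDensity_eq_setLIntegral_mul _ hw (by fun_prop) hs]
  rfl

theorem lintegral_Ioo_rpow_sub_add_rpow_sub_add_one {a b β : ℝ} (hab : a ≤ b) (hβ : -1 < β) :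
    ∫⁻ x in Ioo a b, ENNReal.ofReal ((x - a) ^ β + (b - x) ^ β + 1) =
      ENNReal.ofReal (2 * ((b - a) ^ (β + 1) / (β + 1)) + (b - a)) := by
  have hleft : IntervalIntegrable (fun x => (x - a) ^ β) volume a b := by
    simpa using
      (intervalIntegral.intervalIntegrable_rpow' hβ (a := 0) (b := b - a)).comp_sub_right a
  have hright : IntervalIntegrable (fun x => (b - x) ^ β) volume a b := by
    simpa using
      (intervalIntegral.intervalIntegrable_rpow' hβ (a := b - a) (b := 0)).comp_sub_left b
  have hsum := (hleft.add hright).add (intervalIntegrable_const (c := (1 : ℝ)))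
  have hnonneg : ∀ x ∈ Ioo a b, 0 ≤ (x - a) ^ β + (b - x) ^ β + 1 := fun x hx => by
    have hxa := Real.rpow_nonneg (sub_nonneg.2 hx.1.le) β
    have hbx := Real.rpow_nonneg (sub_nonneg.2 hx.2.le) β
    positivity
  rw [← ofReal_integral_eq_lintegral_ofReal
      ((intervalIntegrable_iff_integrableOn_Ioo_of_le hab).1 hsum)
      (ae_restrict_of_forall_mem measurableSet_Ioo hnonneg),
    ← integral_Ioc_eq_integral_Ioo, ← intervalIntegral.integral_of_le hab,
    intervalIntegral.integral_add (hleft.add hright) intervalIntegrable_const,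
    intervalIntegral.integral_add hleft hright,
    intervalIntegral.integral_comp_sub_right (fun x => x ^ β),
    intervalIntegral.integral_comp_sub_left (fun x => x ^ β), integral_rpow (Or.inl hβ),
    integral_rpow (Or.inl hβ)]
  simp only [sub_self, Real.zero_rpow (by linarith : β + 1 ≠ 0), sub_zero,
    intervalIntegral.integral_const, smul_eq_mul, mul_one]
  ring_nf

@[fun_prop]
theorem measurable_psiC (α : ℝ) : Measurable (psiC α) :=
  Measurable.ite measurableSet_Ioo (by fun_prop) measurable_const

theorem RM_eq_regionBetween (α : ℝ) (n k : ℕ) :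
    RM α n k = regionBetween (fun x => -(2 * psiC α x)) (psiC α) (Ink n k) :=
  rfl

theorem infDist_cantorSet_pos_of_mem_Ink {n k : ℕ} (hk : k < 2 ^ n) {x : ℝ} (hx : x ∈ Ink n k) :
    0 < infDist x cantorSet :=
  (isClosed_cantorSet.notMem_iff_infDist_pos ⟨0, zero_mem_cantorSet⟩).1
    (disjoint_left.1 (disjoint_Ink_cantorSet hk) hx)

theorem setLIntegral_RM_le {α γ : ℝ} {n k : ℕ} (hk : k < 2 ^ n) (hβ : -1 < γ + α) :
    ∫⁻ z in RM α n k, ENNReal.ofReal (infDist z.1 cantorSet ^ γ) ≤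
      ENNReal.ofReal (3 * (2 * (((1 / 3 : ℝ) ^ (n + 1)) ^ (γ + α + 1) / (γ + α + 1)) +
        (1 / 3 : ℝ) ^ (n + 1))) := by
  set a := lep n k + 1 / 3 ^ (n + 1)
  set b := lep n k + 2 / 3 ^ (n + 1)
  have hba : b - a = (1 / 3 : ℝ) ^ (n + 1) := by simp only [a, b, one_div, inv_pow]; ring
  have hab : a ≤ b := by rw [← sub_nonneg, hba]; positivity
  have hpointwise : ∀ x ∈ Ink n k,
      ENNReal.ofReal (infDist x cantorSet ^ γ) *
          ENNReal.ofReal (psiC α x - -(2 * psiC α x)) ≤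
        3 * ENNReal.ofReal ((x - a) ^ (γ + α) + (b - x) ^ (γ + α) + 1) := by
    intro x hx
    have hd := infDist_cantorSet_pos_of_mem_Ink hk hx
    have hψ : psiC α x = infDist x cantorSet ^ α := if_pos (Ink_subset_Ioo hk hx)
    rw [← ENNReal.ofReal_mul (by positivity), ← ENNReal.ofReal_ofNat 3,
      ← ENNReal.ofReal_mul (by norm_num)]
    refine ENNReal.ofReal_le_ofReal ?_
    calc infDist x cantorSet ^ γ * (psiC α x - -(2 * psiC α x))
        = 3 * infDist x cantorSet ^ (γ + α) := by rw [hψ, Real.rpow_add hd]; ring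
      _ ≤ 3 * ((x - a) ^ (γ + α) + (b - x) ^ (γ + α) + 1) := by
        gcongr; exact rpow_infDist_cantorSet_le hk _ hx
  rw [RM_eq_regionBetween, Measure.volume_eq_prod,
    setLIntegral_regionBetween (s := Ink n k)
      (w := fun x => ENNReal.ofReal (infDist x cantorSet ^ γ)) (by fun_prop) (by fun_prop)
      (measurable_psiC α) measurableSet_Ioo]
  calc _ ≤ ∫⁻ x in Ioo a b, 3 * ENNReal.ofReal ((x - a) ^ (γ + α) + (b - x) ^ (γ + α) + 1) :=
        setLIntegral_mono (by fun_prop) hpointwise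
    _ = _ := by
        rw [lintegral_const_mul _ (by fun_prop),
          lintegral_Ioo_rpow_sub_add_rpow_sub_add_one hab hβ, hba,
          ← ENNReal.ofReal_ofNat 3, ← ENNReal.ofReal_mul (by norm_num)]

theorem lintegral_RMall_le_tsum (α : ℝ) (f : ℝ × ℝ → ℝ≥0∞) :
    ∫⁻ z in RMall α, f z ≤ ∑' n, ∑ k ∈ Finset.range (2 ^ n), ∫⁻ z in RM α n k, f z := by
  simp only [← withDensity_apply' f]
  refine (measure_iUnion_le _).trans (ENNReal.tsum_le_tsum fun n => ?_)
  have hrange : {k : ℕ | k < 2 ^ n} = ↑(Finset.range (2 ^ n)) := by ext; simp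
  rw [hrange]
  exact measure_biUnion_finset_le _ _

theorem summable_two_pow_mul_gap_bound {β : ℝ} (hβ : Real.logb 3 2 < β + 1) :
    Summable fun n : ℕ => (2 : ℝ) ^ n *
      (3 * (2 * (((1 / 3 : ℝ) ^ (n + 1)) ^ (β + 1) / (β + 1)) + (1 / 3 : ℝ) ^ (n + 1))) := by
  have hr : 2 * (1 / 3 : ℝ) ^ (β + 1) < 1 := by
    have h3 : 2 < (3 : ℝ) ^ (β + 1) := (Real.logb_lt_iff_lt_rpow (by norm_num) two_pos).1 hβ
    rw [Real.div_rpow zero_le_one (by norm_num), Real.one_rpow, mul_one_div,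
      div_lt_one (by positivity)]
    exact h3
  have hterm : ∀ n : ℕ, (2 : ℝ) ^ n *
      (3 * (2 * (((1 / 3 : ℝ) ^ (n + 1)) ^ (β + 1) / (β + 1)) + (1 / 3 : ℝ) ^ (n + 1))) =
        6 * (1 / 3 : ℝ) ^ (β + 1) / (β + 1) * (2 * (1 / 3 : ℝ) ^ (β + 1)) ^ n +
          (2 / 3 : ℝ) ^ n := by
    intro n
    rw [← Real.rpow_pow_comm (by norm_num), pow_succ, pow_succ, mul_pow, div_pow, div_pow]
    ring
  simp only [hterm]
  exact ((summable_geometric_of_lt_one (by positivity) hr).mul_left _).add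
    (summable_geometric_of_lt_one (by norm_num) (by norm_num))

theorem lintegral_RMall_lt_top {α γ : ℝ} (h : Real.logb 3 2 < γ + α + 1) :
    ∫⁻ z in RMall α, ENNReal.ofReal (infDist z.1 cantorSet ^ γ) < ⊤ := by
  have hβ : -1 < γ + α := by
    linarith [Real.logb_pos (b := 3) (x := 2) (by norm_num) (by norm_num)]
  refine (lintegral_RMall_le_tsum α _).trans_lt <| lt_of_le_of_lt
    (ENNReal.tsum_le_tsum fun n => ?_) (summable_two_pow_mul_gap_bound h).tsum_ofReal_lt_top
  refine (Finset.sum_le_card_nsmul _ _ _ fun k hk =>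
    setLIntegral_RM_le (Finset.mem_range.1 hk) hβ).trans_eq ?_
  rw [Finset.card_range, nsmul_eq_mul, ENNReal.ofReal_mul (p := 2 ^ n) (by positivity),
    ENNReal.ofReal_pow zero_le_two]
  norm_num

theorem lt_weight_exponent_add_one {l α p q : ℝ} (hα : l < 2 * α) (hα₁ : α < 1)
    (hp : (1 + α - l) / (2 * α - l) < p) (hq : 0 < q)
    (hq' : q < (1 + α - l) * p / ((1 + α - l) + (1 - α) * p)) :
    l < (α - 1) * p * q / (p - q) + α + 1 := by
  have hL : 0 < 1 + α - l := by linarith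
  have hp₀ : 0 < p := (div_pos hL (by linarith)).trans hp
  have hpq₀ : 0 < (1 - α) * p * q := by have := sub_pos.2 hα₁; positivity
  have hkey : (1 - α) * p * q < (1 + α - l) * (p - q) := by
    rw [lt_div_iff₀ (add_pos hL (mul_pos (sub_pos.2 hα₁) hp₀))] at hq'
    linarith
  have hpq : 0 < p - q := pos_of_mul_pos_right (hpq₀.trans hkey) hL.le
  have : -(1 + α - l) < (α - 1) * p * q / (p - q) := by
    rw [lt_div_iff₀ hpq]
    linarith
  linarith

/-- For the admissible range of `p` and `q`, the integral of
`dist(x₁, C)^{(α−1)pq/(p−q)}` over `⋃_{n,k} R⁻_{n,k}` is finite. -/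
theorem integral_weight_RMall_finite (α p q : ℝ)
    (hα₁ : Real.log 2 / (2 * Real.log 3) < α) (hα₂ : α < 1)
    (hp : ((1 + α) - Real.log 2 / Real.log 3) / (2 * α - Real.log 2 / Real.log 3) < p)
    (hq₁ : 1 ≤ q)
    (hq₂ : q < ((1 + α) - Real.log 2 / Real.log 3) * p /
        ((1 + α) - Real.log 2 / Real.log 3 + (1 - α) * p)) :
    (∫⁻ x in RMall α,
        ENNReal.ofReal (infDist x.1 cantorSet ^ ((α - 1) * p * q / (p - q)))) < ⊤ := by
  rw [div_mul_eq_div_div_swap] at hα₁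
  exact lintegral_RMall_lt_top <|
    lt_weight_exponent_add_one (l := Real.log 2 / Real.log 3) (by linarith) hα₂ hp (by linarith) hq₂
end
end
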